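/- Let n ≥ 1 and let W_n be the subgroup of the symmetric group 𝔖_{2n} on {1, 2, …, 2n} generated by the permutations (2j−1 2j)(2j+1 2j+2) for 1 ≤ j ≤ n−1 together with the permutations (2j−1 2j+1)(2j 2j+2) for 1 ≤ j ≤ n−1. Then the fixed-point-free involution u′ = (1 2)(3 4)⋯(2n−1 2n) belongs to W_n if and only if n is even. -/

import Mathlib

namespace PASaux

/-- flip of the last bit: the involution (0 1)(2 3)⋯ -/
def fl (n : ℕ) (i : Fin (2*n)) : Fin (2*n) :=
  ⟨2*(i.1/2) + (1 - i.1 % 2), by have := i.2; omega⟩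

def db (n : ℕ) (j : Fin n) : Fin (2*n) := ⟨2*j.1, by linarith [j.2]⟩

def chi (n : ℕ) (σ : Equiv.Perm (Fin (2*n))) : ZMod 2 :=
  ∑ j : Fin n, ((σ (db n j)).1 : ZMod 2)

def Cc (n : ℕ) (σ : Equiv.Perm (Fin (2*n))) : Prop :=
  ∀ i, σ (fl n i) = fl n (σ i)

lemma cast2_congr {a b : ℕ} (h : a % 2 = b % 2) : (a : ZMod 2) = (b : ZMod 2) := by
  rw [← ZMod.natCast_mod a 2, ← ZMod.natCast_mod b 2, h]

lemma cast2_even {a : ℕ} (h : a % 2 = 0) : (a : ZMod 2) = 0 := by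
  rw [← ZMod.natCast_mod a 2, h]; rfl

lemma cast2_odd {a : ℕ} (h : a % 2 = 1) : (a : ZMod 2) = 1 := by
  rw [← ZMod.natCast_mod a 2, h]; rfl

lemma parity_fl {n : ℕ} (i : Fin (2*n)) :
    (((fl n i).1 : ℕ) : ZMod 2) = (i.1 : ZMod 2) + 1 := by
  have h : (fl n i).1 % 2 = (i.1 + 1) % 2 := by
    simp only [fl]; omega
  rw [cast2_congr h]; push_cast; ring

lemma Cc.one {n : ℕ} : Cc n 1 := fun _ => rfl

lemma Cc.mul {n : ℕ} {σ τ : Equiv.Perm (Fin (2*n))} (hσ : Cc n σ) (hτ : Cc n τ) :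
    Cc n (σ * τ) := fun i => by
  simp only [Equiv.Perm.mul_apply, hτ i, hσ (τ i)]

lemma Cc.inv {n : ℕ} {σ : Equiv.Perm (Fin (2*n))} (hσ : Cc n σ) :
    Cc n σ⁻¹ := fun i => by
  have h := hσ (σ⁻¹ i)
  rw [show σ (σ⁻¹ i) = i from σ.apply_symm_apply i] at h
  rw [← h, show σ⁻¹ (σ (fl n (σ⁻¹ i))) = fl n (σ⁻¹ i) from σ.symm_apply_apply _]

def pib {n : ℕ} (σ : Equiv.Perm (Fin (2*n))) (j : Fin n) : Fin n :=
  ⟨(σ (db n j)).1 / 2, by have := (σ (db n j)).2; omega⟩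

lemma fl_db {n : ℕ} (j : Fin n) : fl n (db n j) = ⟨2*j.1+1, by linarith [j.2]⟩ := by
  apply Fin.ext; simp only [fl, db]; omega

lemma pib_bij {n : ℕ} {σ : Equiv.Perm (Fin (2*n))} (hσ : Cc n σ) :
    Function.Bijective (pib σ) := by
  rw [← Finite.injective_iff_bijective]
  intro j k h
  have hval : (σ (db n j)).1 / 2 = (σ (db n k)).1 / 2 := congrArg Fin.val h
  by_cases he : σ (db n j) = σ (db n k)
  · have := σ.injective he
    apply Fin.ext
    have : (db n j).1 = (db n k).1 := congrArg Fin.val this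
    simp only [db] at this; omega
  · have hne : (σ (db n j)).1 ≠ (σ (db n k)).1 := fun hh => he (Fin.ext hh)
    have hfl : σ (db n j) = fl n (σ (db n k)) := by
      apply Fin.ext; simp only [fl]; omega
    rw [← hσ (db n k), fl_db] at hfl
    have := σ.injective hfl
    have hv : (db n j).1 = 2*k.1+1 := congrArg Fin.val this
    simp only [db] at hv; omega

lemma db_eq_of_even {n : ℕ} (x : Fin (2*n)) (hx : x.1 % 2 = 0)
    {j : Fin n} (hj : (x.1)/2 = j.1) : x = db n j := by
  apply Fin.ext; simp only [db]; omega

lemma chi_mul {n : ℕ} {σ τ : Equiv.Perm (Fin (2*n))} (hσ : Cc n σ) (hτ : Cc n τ) :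
    chi n (σ * τ) = chi n σ + chi n τ := by
  have key : ∀ j : Fin n,
      (((σ * τ) (db n j)).1 : ZMod 2)
        = ((σ (db n (pib τ j))).1 : ZMod 2) + ((τ (db n j)).1 : ZMod 2) := by
    intro j
    rcases Nat.mod_two_eq_zero_or_one (τ (db n j)).1 with hb | hb
    · have hx : τ (db n j) = db n (pib τ j) := db_eq_of_even _ hb rfl
      rw [Equiv.Perm.mul_apply, hx,
        cast2_even (show (db n (pib τ j)).1 % 2 = 0 by simp only [db, Fin.val_mk]; omega),
        add_zero]
    · have hx : τ (db n j) = fl n (db n (pib τ j)) := by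
        apply Fin.ext; simp only [fl, db, pib, Fin.val_mk] at hb ⊢; omega
      rw [Equiv.Perm.mul_apply, hx, hσ (db n (pib τ j)), parity_fl, parity_fl,
        cast2_even (show (db n (pib τ j)).1 % 2 = 0 by simp only [db, Fin.val_mk]; omega)]
      ring
  unfold chi
  rw [Finset.sum_congr rfl (fun j _ => key j), Finset.sum_add_distrib]
  congr 1
  exact (pib_bij hτ).sum_comp (fun k => ((σ (db n k)).1 : ZMod 2))

lemma chi_one {n : ℕ} : chi n 1 = 0 := by
  apply Finset.sum_eq_zero
  intro j _
  exact cast2_even (by simp only [Equiv.Perm.one_apply, db]; omega)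

/-- elementary within-block swap -/
def w (n k : ℕ) : Equiv.Perm (Fin (2*n)) :=
  if h : 2*k+1 < 2*n then Equiv.swap ⟨2*k, by omega⟩ ⟨2*k+1, h⟩ else 1

lemma Cc_w {n : ℕ} (k : ℕ) : Cc n (w n k) := by
  unfold w
  split_ifs with h
  · intro i
    have hi := i.2
    simp only [Equiv.swap_apply_def, fl, Fin.ext_iff, apply_ite (Fin.val)]
    split_ifs <;> omega
  · exact Cc.one

lemma chi_w {n : ℕ} {k : ℕ} (hk : k < n) : chi n (w n k) = 1 := by
  unfold chi
  rw [Finset.sum_eq_single_of_mem (⟨k, hk⟩ : Fin n) (Finset.mem_univ _)]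
  · have : w n k (db n ⟨k, hk⟩) = ⟨2*k+1, by omega⟩ := by
      rw [w, dif_pos (by omega)]
      have : db n ⟨k, hk⟩ = (⟨2*k, by omega⟩ : Fin (2*n)) := rfl
      rw [this, Equiv.swap_apply_left]
    rw [this]
    exact cast2_odd (by simp only [Fin.val_mk]; omega)
  · intro j _ hj
    have hjk : j.1 ≠ k := fun hh => hj (Fin.ext hh)
    have : w n k (db n j) = db n j := by
      rw [w, dif_pos (by omega)]
      apply Equiv.swap_apply_of_ne_of_ne <;>
        · intro hh
          have := congrArg Fin.val hh
          simp only [db] at this; omega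
    rw [this]
    exact cast2_even (by simp only [db]; omega)

lemma prod_w_apply {n : ℕ} : ∀ m, m ≤ n → ∀ i : Fin (2*n),
    (((List.range m).map (w n)).prod) i = if i.1 < 2*m then fl n i else i := by
  intro m
  induction m with
  | zero => intro _ i; simp
  | succ m ih =>
    intro hm i
    rw [List.range_succ, List.map_append, List.prod_append]
    simp only [List.map_cons, List.map_nil, List.prod_cons, List.prod_nil, mul_one]
    rw [Equiv.Perm.mul_apply]
    have hw : w n m = Equiv.swap (⟨2*m, by omega⟩ : Fin (2*n)) ⟨2*m+1, by omega⟩ :=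
      dif_pos (by omega)
    have hi := i.2
    by_cases h1 : i.1 = 2*m
    · have hieq : i = (⟨2*m, by omega⟩ : Fin (2*n)) := Fin.ext h1
      rw [hieq, hw, Equiv.swap_apply_left, ih (by omega)]
      rw [if_neg (by simp only [Fin.val_mk]; omega), if_pos (by simp only [Fin.val_mk]; omega)]
      apply Fin.ext; simp only [fl]; omega
    · by_cases h2 : i.1 = 2*m+1
      · have hieq : i = (⟨2*m+1, by omega⟩ : Fin (2*n)) := Fin.ext h2
        rw [hieq, hw, Equiv.swap_apply_right, ih (by omega)]
        rw [if_neg (by simp only [Fin.val_mk]; omega), if_pos (by simp only [Fin.val_mk]; omega)]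
        apply Fin.ext; simp only [fl]; omega
      · have hne : w n m i = i := by
          rw [hw]
          apply Equiv.swap_apply_of_ne_of_ne <;>
            · intro hh; have := congrArg Fin.val hh; simp at this; omega
        rw [hne, ih (by omega)]
        by_cases h3 : i.1 < 2*m
        · rw [if_pos h3, if_pos (by omega)]
        · rw [if_neg h3, if_neg (by omega)]

lemma pair_prod {M : Type*} [Monoid M] (f : ℕ → M) :
    ∀ m, ((List.range (2*m)).map f).prod
      = ((List.range m).map (fun j => f (2*j) * f (2*j+1))).prod := by
  intro m
  induction m with
  | zero => simp
  | succ m ih =>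
    have h : 2*(m+1) = (2*m+1)+1 := by ring
    rw [h, List.range_succ, List.range_succ, List.range_succ]
    simp only [List.map_append, List.prod_append, List.map_cons, List.map_nil,
      List.prod_cons, List.prod_nil, mul_one, ih]
    rw [mul_assoc]

end PASaux

open PASaux in
/-- Let `W_n ≤ 𝔖_{2n}` be the subgroup generated by `(2j−1 2j)(2j+1 2j+2)` and
`(2j−1 2j+1)(2j 2j+2)` for `1 ≤ j ≤ n−1` (written here 0-based on `Fin (2n)`).
Then the fixed-point-free involution `(1 2)(3 4)⋯(2n−1 2n)` lies in `W_n`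
if and only if `n` is even. -/
theorem prod_adjacent_swaps_mem_iff_even (n : ℕ) (hn : 1 ≤ n) :
    (List.ofFn (fun j : Fin n =>
        Equiv.swap (⟨2 * j.1, by have := j.2; omega⟩ : Fin (2 * n))
          ⟨2 * j.1 + 1, by have := j.2; omega⟩)).prod ∈
      Subgroup.closure {σ : Equiv.Perm (Fin (2 * n)) | ∃ j : ℕ, ∃ h : j + 1 < n,
        σ = Equiv.swap (⟨2 * j, by omega⟩ : Fin (2 * n)) ⟨2 * j + 1, by omega⟩ *
              Equiv.swap (⟨2 * j + 2, by omega⟩ : Fin (2 * n)) ⟨2 * j + 3, by omega⟩ ∨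
        σ = Equiv.swap (⟨2 * j, by omega⟩ : Fin (2 * n)) ⟨2 * j + 2, by omega⟩ *
              Equiv.swap (⟨2 * j + 1, by omega⟩ : Fin (2 * n)) ⟨2 * j + 3, by omega⟩} ↔
      Even n := by
  have hL : (List.ofFn (fun j : Fin n =>
      Equiv.swap (⟨2 * j.1, by have := j.2; omega⟩ : Fin (2 * n))
        ⟨2 * j.1 + 1, by have := j.2; omega⟩)) = (List.range n).map (w n) := by
    apply List.ext_getElem
    · simp
    · intro i h1 h2
      simp only [List.getElem_ofFn, List.getElem_map, List.getElem_range]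
      rw [w, dif_pos (by simp at h1 ⊢; omega)]
      try rfl
  rw [hL]
  constructor
  · -- forward: membership implies Even n
    intro hmem
    set S : Set (Equiv.Perm (Fin (2 * n))) := {σ : Equiv.Perm (Fin (2 * n)) | ∃ j : ℕ, ∃ h : j + 1 < n,
        σ = Equiv.swap (⟨2 * j, by omega⟩ : Fin (2 * n)) ⟨2 * j + 1, by omega⟩ *
              Equiv.swap (⟨2 * j + 2, by omega⟩ : Fin (2 * n)) ⟨2 * j + 3, by omega⟩ ∨
        σ = Equiv.swap (⟨2 * j, by omega⟩ : Fin (2 * n)) ⟨2 * j + 2, by omega⟩ *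
              Equiv.swap (⟨2 * j + 1, by omega⟩ : Fin (2 * n)) ⟨2 * j + 3, by omega⟩} with hS
    let H : Subgroup (Equiv.Perm (Fin (2 * n))) :=
      { carrier := {σ | Cc n σ ∧ chi n σ = 0}
        one_mem' := ⟨Cc.one, chi_one⟩
        mul_mem' := fun {a b} ha hb =>
          ⟨ha.1.mul hb.1, by rw [chi_mul ha.1 hb.1, ha.2, hb.2, add_zero]⟩
        inv_mem' := fun {a} ha => by
          refine ⟨ha.1.inv, ?_⟩
          have h1 := chi_mul ha.1.inv ha.1
          rw [inv_mul_cancel, chi_one, ha.2, add_zero] at h1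
          exact h1.symm }
    have hSH : S ⊆ H := by
      rintro σ ⟨j, hj, h | h⟩
      · -- s-type generator: product of two within-block swaps
        have e1 : Equiv.swap (⟨2 * j, by omega⟩ : Fin (2 * n)) ⟨2 * j + 1, by omega⟩ = w n j := by
          rw [w, dif_pos (by omega)]
        have e2 : Equiv.swap (⟨2 * j + 2, by omega⟩ : Fin (2 * n)) ⟨2 * j + 3, by omega⟩
            = w n (j+1) := by
          rw [w, dif_pos (by omega)]
          congr 1
        rw [h, e1, e2]
        refine ⟨(Cc_w j).mul (Cc_w (j+1)), ?_⟩
        rw [chi_mul (Cc_w j) (Cc_w (j+1)), chi_w (by omega), chi_w hj]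
        decide
      · -- t-type generator: direct computation
        constructor
        · intro i
          have hi := i.2
          rw [h]
          simp only [Equiv.Perm.mul_apply, Equiv.swap_apply_def, fl, Fin.ext_iff,
            apply_ite (Fin.val), Fin.val_mk]
          split_ifs <;> omega
        · apply Finset.sum_eq_zero
          intro i _
          apply cast2_even
          rw [h]
          simp only [Equiv.Perm.mul_apply, Equiv.swap_apply_def, db, Fin.ext_iff,
            apply_ite (Fin.val), Fin.val_mk]
          have hi := i.2
          split_ifs <;> omega
    have hH : ((List.range n).map (w n)).prod ∈ H := (Subgroup.closure_le H).2 hSH hmem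
    have hchi : chi n ((List.range n).map (w n)).prod = (n : ZMod 2) := by
      unfold chi
      have : ∀ j : Fin n, (((((List.range n).map (w n)).prod) (db n j)).1 : ZMod 2) = 1 := by
        intro j
        rw [prod_w_apply n le_rfl, if_pos (by have := (db n j).2; omega), parity_fl,
          cast2_even (show (db n j).1 % 2 = 0 by simp only [db, Fin.val_mk]; omega)]
        ring
      rw [Finset.sum_congr rfl (fun j _ => this j), Finset.sum_const, Finset.card_univ,
        Fintype.card_fin, nsmul_eq_mul, mul_one]
    have h0 : (n : ZMod 2) = 0 := by rw [← hchi]; exact hH.2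
    obtain ⟨k, hk⟩ := (ZMod.natCast_eq_zero_iff n 2).1 h0
    exact ⟨k, by omega⟩
  · -- backward: Even n implies membership
    rintro ⟨m, hm⟩
    have hn2 : n = 2*m := by omega
    subst hn2
    rw [pair_prod]
    apply Subgroup.list_prod_mem
    intro x hx
    simp only [List.mem_map, List.mem_range] at hx
    obtain ⟨j, hj, rfl⟩ := hx
    apply Subgroup.subset_closure
    refine ⟨2*j, by omega, Or.inl ?_⟩
    rw [w, w, dif_pos (by omega), dif_pos (by omega)]
    congr 1
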